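/- arXiv:2405.07552 — 7 statements merged into one kernel-verified Lean document; each statement's English description precedes it below -/
import Mathlib

section
/- Suppose |A β* − a|_∞ ≤ λ/2 and that δᵀAδ ≥ α|δ|₂² for every δ ∈ ℝ^p with |δ|₁ ≤ 4√s·|δ|₂, where α > 0. Then every global minimizer β̂ of F satisfies |β̂ − β*|₂ ≤ 6 α⁻¹ √s λ. -/
open Matrix Finset

noncomputable def l1 {p : ℕ} (v : Fin p → ℝ) : ℝ := ∑ j, |v j|

noncomputable def l2 {p : ℕ} (v : Fin p → ℝ) : ℝ := Real.sqrt (∑ j, (v j) ^ 2)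

noncomputable def Fobj {p : ℕ} (A : Matrix (Fin p) (Fin p) ℝ) (a : Fin p → ℝ)
    (lam : ℝ) (β : Fin p → ℝ) : ℝ :=
  (1 / 2) * (β ⬝ᵥ A.mulVec β) - β ⬝ᵥ a + lam * l1 β

noncomputable def supp {p : ℕ} (v : Fin p → ℝ) : Finset (Fin p) :=
  Finset.univ.filter fun j => v j ≠ 0

/-! Write `δ = β̂ - β*`. Comparing `F β̂ ≤ F β*` and bounding the linear term by `λ/2 · |δ|₁`
gives the basic inequality `δᵀAδ + λ |δ_{Sᶜ}|₁ ≤ 3λ |δ_S|₁`. As `δᵀAδ ≥ 0`, `δ` lies in the cone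
`|δ_{Sᶜ}|₁ ≤ 3 |δ_S|₁`, so `|δ|₁ ≤ 4 |δ_S|₁ ≤ 4√s |δ|₂` and the restricted eigenvalue condition
applies: `α |δ|₂² ≤ δᵀAδ ≤ 3λ√s |δ|₂`, i.e. `|δ|₂ ≤ 3 α⁻¹ √s λ`. -/

lemma Matrix.IsSymm.dotProduct_mulVec_comm {n R : Type*} [Fintype n] [CommSemiring R]
    {A : Matrix n n R} (hA : A.IsSymm) (x y : n → R) : x ⬝ᵥ A *ᵥ y = y ⬝ᵥ A *ᵥ x := by
  rw [dotProduct_mulVec, ← mulVec_transpose, hA.eq, dotProduct_comm]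

section Lasso

variable {p : ℕ}

lemma l1_eq_sum_add_sum_compl (S : Finset (Fin p)) (v : Fin p → ℝ) :
    l1 v = ∑ j ∈ S, |v j| + ∑ j ∈ Sᶜ, |v j| :=
  (sum_add_sum_compl S _).symm

lemma sum_abs_le_sqrt_card_mul_l2 (S : Finset (Fin p)) (v : Fin p → ℝ) :
    ∑ j ∈ S, |v j| ≤ Real.sqrt #S * l2 v := by
  rw [l2, ← Real.sqrt_mul (Nat.cast_nonneg _)]
  refine Real.le_sqrt_of_sq_le (sq_sum_le_card_mul_sum_sq.trans ?_)
  gcongr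
  simp_rw [sq_abs]
  exact sum_le_sum_of_subset_of_nonneg (subset_univ S) fun j _ _ => sq_nonneg _

lemma abs_dotProduct_le_mul_l1 {c : Fin p → ℝ} {M : ℝ} (hc : ∀ j, |c j| ≤ M)
    (v : Fin p → ℝ) : |v ⬝ᵥ c| ≤ M * l1 v := by
  calc |v ⬝ᵥ c| ≤ ∑ j, |v j * c j| := abs_sum_le_sum_abs _ _
    _ ≤ ∑ j, |v j| * M := sum_le_sum fun j _ => by
        rw [abs_mul]; exact mul_le_mul_of_nonneg_left (hc j) (abs_nonneg _)
    _ = M * l1 v := by rw [l1, ← sum_mul, mul_comm]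

lemma l1_sub_l1_add_le (β δ : Fin p → ℝ) :
    l1 β - l1 (β + δ) ≤ ∑ j ∈ supp β, |δ j| - ∑ j ∈ (supp β)ᶜ, |δ j| := by
  rw [l1_eq_sum_add_sum_compl (supp β), l1_eq_sum_add_sum_compl (supp β)]
  have h_on : ∑ j ∈ supp β, (|β j| - |(β + δ) j|) ≤ ∑ j ∈ supp β, |δ j| :=
    sum_le_sum fun j _ => by
      simpa [abs_sub_comm] using abs_sub_abs_le_abs_sub (β j) ((β + δ) j)
  have hzero : ∀ j ∈ (supp β)ᶜ, β j = 0 := fun j hj => by simpa [supp] using hj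
  have h_off_β : ∑ j ∈ (supp β)ᶜ, |β j| = 0 := sum_eq_zero fun j hj => by simp [hzero j hj]
  have h_off_add : ∑ j ∈ (supp β)ᶜ, |(β + δ) j| = ∑ j ∈ (supp β)ᶜ, |δ j| :=
    sum_congr rfl fun j hj => by simp [hzero j hj]
  rw [sum_sub_distrib] at h_on
  linarith

lemma Fobj_add_sub_Fobj {A : Matrix (Fin p) (Fin p) ℝ} (hA : A.IsSymm) (a : Fin p → ℝ)
    (lam : ℝ) (β δ : Fin p → ℝ) :
    Fobj A a lam (β + δ) - Fobj A a lam β =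
      (1 / 2) * (δ ⬝ᵥ A *ᵥ δ) + δ ⬝ᵥ (A *ᵥ β - a) + lam * (l1 (β + δ) - l1 β) := by
  simp only [Fobj, mulVec_add, dotProduct_add, add_dotProduct, dotProduct_sub,
    hA.dotProduct_mulVec_comm β δ]
  ring

lemma lasso_basic_inequality {A : Matrix (Fin p) (Fin p) ℝ} (hA : A.IsSymm)
    {a β βhat : Fin p → ℝ} {lam : ℝ} (hlam : 0 ≤ lam)
    (hgrad : ∀ j, |(A *ᵥ β - a) j| ≤ lam / 2) (hmin : Fobj A a lam βhat ≤ Fobj A a lam β) :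
    (βhat - β) ⬝ᵥ A *ᵥ (βhat - β) + lam * ∑ j ∈ (supp β)ᶜ, |(βhat - β) j|
      ≤ 3 * lam * ∑ j ∈ supp β, |(βhat - β) j| := by
  set δ := βhat - β
  have hβhat : β + δ = βhat := add_sub_cancel β βhat
  have hexpand := Fobj_add_sub_Fobj hA a lam β δ
  have hlinear := neg_abs_le (δ ⬝ᵥ (A *ᵥ β - a))
  have hdot := abs_dotProduct_le_mul_l1 hgrad δ
  have hpenalty := mul_le_mul_of_nonneg_left (l1_sub_l1_add_le β δ) hlam
  rw [hβhat] at hexpand hpenalty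
  rw [l1_eq_sum_add_sum_compl (supp β)] at hdot
  linarith

lemma le_div_of_mul_sq_le {x c α : ℝ} (hα : 0 < α) (hc : 0 ≤ c) (hx : 0 ≤ x)
    (h : α * x ^ 2 ≤ c * x) : x ≤ c / α := by
  rw [le_div_iff₀ hα]
  rcases hx.eq_or_lt with rfl | hpos
  · simpa using hc
  · nlinarith

end Lasso

theorem stmt0_general {p : ℕ} (A : Matrix (Fin p) (Fin p) ℝ) (hA : A.PosSemidef)
    (a βstar : Fin p → ℝ) (lam α : ℝ) (hlam : 0 < lam) (hα : 0 < α)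
    (h1 : ∀ j, |(A.mulVec βstar - a) j| ≤ lam / 2)
    (h2 : ∀ δ : Fin p → ℝ,
      l1 δ ≤ 4 * Real.sqrt ((supp βstar).card) * l2 δ →
      α * (l2 δ) ^ 2 ≤ δ ⬝ᵥ A.mulVec δ)
    (βhat : Fin p → ℝ) (hmin : ∀ β, Fobj A a lam βhat ≤ Fobj A a lam β) :
    l2 (βhat - βstar) ≤ 6 * α⁻¹ * Real.sqrt ((supp βstar).card) * lam := by
  have hbasic := lasso_basic_inequality (isHermitian_iff_isSymm.mp hA.isHermitian) hlam.le h1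
    (hmin βstar)
  set δ := βhat - βstar
  set S := supp βstar
  have hquad : 0 ≤ δ ⬝ᵥ A *ᵥ δ := by simpa using hA.dotProduct_mulVec_nonneg δ
  have hS := sum_abs_le_sqrt_card_mul_l2 S δ
  have hoff : ∑ j ∈ Sᶜ, |δ j| ≤ 3 * ∑ j ∈ S, |δ j| :=
    le_of_mul_le_mul_left (by linarith) hlam
  have hcone : l1 δ ≤ 4 * Real.sqrt #S * l2 δ := by
    rw [l1_eq_sum_add_sum_compl S]; linarith
  have hoff_nonneg : 0 ≤ lam * ∑ j ∈ Sᶜ, |δ j| := by positivity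
  have hl2 : l2 δ ≤ 3 * lam * Real.sqrt #S / α :=
    le_div_of_mul_sq_le hα (by positivity) (Real.sqrt_nonneg _) <| calc
      α * l2 δ ^ 2 ≤ δ ⬝ᵥ A *ᵥ δ := h2 δ hcone
      _ ≤ 3 * lam * ∑ j ∈ S, |δ j| := by linarith
      _ ≤ 3 * lam * (Real.sqrt #S * l2 δ) := by gcongr
      _ = 3 * lam * Real.sqrt #S * l2 δ := by ring
  calc l2 δ ≤ 3 * lam * Real.sqrt #S / α := hl2
    _ = 3 * α⁻¹ * Real.sqrt #S * lam := by ring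
    _ ≤ 6 * α⁻¹ * Real.sqrt #S * lam := by gcongr; norm_num

/-- if `|Aβ* − a|_∞ ≤ λ/2` and the restricted eigenvalue condition
`δᵀAδ ≥ α|δ|₂²` holds for all `δ` with `|δ|₁ ≤ 4√s|δ|₂`, then every global minimizer
`β̂` of the ℓ1-penalized quadratic objective satisfies `|β̂ − β*|₂ ≤ 6 α⁻¹ √s λ`. -/
theorem stmt0 {p : ℕ} (hp : 1 ≤ p) (A : Matrix (Fin p) (Fin p) ℝ) (hA : A.PosSemidef)
    (a βstar : Fin p → ℝ) (lam α : ℝ) (hlam : 0 < lam) (hα : 0 < α)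
    (h1 : ∀ j, |(A.mulVec βstar - a) j| ≤ lam / 2)
    (h2 : ∀ δ : Fin p → ℝ,
      l1 δ ≤ 4 * Real.sqrt ((supp βstar).card) * l2 δ →
      α * (l2 δ) ^ 2 ≤ δ ⬝ᵥ A.mulVec δ)
    (βhat : Fin p → ℝ) (hmin : ∀ β, Fobj A a lam βhat ≤ Fobj A a lam β) :
    l2 (βhat - βstar) ≤ 6 * α⁻¹ * Real.sqrt ((supp βstar).card) * lam :=
  stmt0_general A hA a βstar lam α hlam hα h1 h2 βhat hmin
end

section
/- If |Aβ* − a|_∞ ≤ λ/2, then every global minimizer β̂ of F satisfies |(β̂ − β*)_{Sᶜ}|₁ ≤ 3 |(β̂ − β*)_S|₁. -/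
open Matrix Finset

/-- `restr v T` agrees with `v` on `T` and is zero outside `T`. -/
noncomputable def restr {p : ℕ} (v : Fin p → ℝ) (T : Finset (Fin p)) : Fin p → ℝ :=
  fun j => if j ∈ T then v j else 0

/-!
Since `β̂` beats `β*`, expanding the quadratic around `β*` and dropping the nonnegative term
`½ δᵀAδ` (`δ = β̂ − β*`) gives the basic inequality `⟪δ, Aβ* − a⟫ + λ|β̂|₁ ≤ λ|β*|₁`.
By Hölder the inner product is at least `−(λ/2)(|δ_S|₁ + |δ_{Sᶜ}|₁)`, and the triangle
inequality on `S` gives `|β̂|₁ ≥ |β*|₁ − |δ_S|₁ + |δ_{Sᶜ}|₁`. Together,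
`(λ/2)|δ_{Sᶜ}|₁ ≤ (3λ/2)|δ_S|₁`.
-/

section L1

variable {p : ℕ}

lemma l1_eq_l1_restr_add_l1_restr_compl (v : Fin p → ℝ) (T : Finset (Fin p)) :
    l1 v = l1 (restr v T) + l1 (restr v Tᶜ) := by
  rw [l1, l1, l1, ← sum_add_distrib]
  refine sum_congr rfl fun j _ => ?_
  by_cases hj : j ∈ T <;> simp [restr, hj]

lemma abs_dotProduct_le_l1_mul {v c : Fin p → ℝ} {M : ℝ} (hc : ∀ j, |c j| ≤ M) :
    |v ⬝ᵥ c| ≤ l1 v * M :=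
  calc |v ⬝ᵥ c| ≤ ∑ j, |v j * c j| := abs_sum_le_sum_abs _ _
    _ ≤ ∑ j, |v j| * M := sum_le_sum fun j _ => by
        rw [abs_mul]; exact mul_le_mul_of_nonneg_left (hc j) (abs_nonneg _)
    _ = l1 v * M := by rw [l1, sum_mul]

lemma l1_sub_l1_restr_supp_add_l1_restr_compl_le (b d : Fin p → ℝ) :
    l1 b - l1 (restr d (supp b)) + l1 (restr d (supp b)ᶜ) ≤ l1 (b + d) := by
  simp only [l1, ← sum_sub_distrib, ← sum_add_distrib]
  refine sum_le_sum fun j _ => ?_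
  by_cases hj : b j = 0
  · simp [restr, supp, hj]
  · have := abs_sub_abs_le_abs_sub (b j) (-d j)
    simp_all [restr, supp]

end L1

section Lasso

variable {p : ℕ} {A : Matrix (Fin p) (Fin p) ℝ} {a : Fin p → ℝ} {lam : ℝ}

lemma Fobj_add (hA : A.IsSymm) (b d : Fin p → ℝ) :
    Fobj A a lam (b + d) = Fobj A a lam b + d ⬝ᵥ (A *ᵥ b - a)
      + (1 / 2) * (d ⬝ᵥ A *ᵥ d) + lam * (l1 (b + d) - l1 b) := by
  have hcomm : b ⬝ᵥ A *ᵥ d = d ⬝ᵥ A *ᵥ b := by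
    simpa only [hA.eq] using dotProduct_transpose_mulVec A b d
  simp only [Fobj, mulVec_add, add_dotProduct, dotProduct_add, dotProduct_sub, hcomm]
  ring

lemma dotProduct_add_mul_l1_le_of_forall_Fobj_le (hA : A.PosSemidef) {βhat : Fin p → ℝ}
    (hmin : ∀ β, Fobj A a lam βhat ≤ Fobj A a lam β) (β : Fin p → ℝ) :
    (βhat - β) ⬝ᵥ (A *ᵥ β - a) + lam * l1 βhat ≤ lam * l1 β := by
  have hsymm : A.IsSymm := isHermitian_iff_isSymm.mp hA.isHermitian
  have hquad : 0 ≤ (βhat - β) ⬝ᵥ A *ᵥ (βhat - β) := by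
    simpa using hA.dotProduct_mulVec_nonneg (βhat - β)
  have hexp := Fobj_add (a := a) (lam := lam) hsymm β (βhat - β)
  rw [add_sub_cancel] at hexp
  linarith [hmin β]

lemma l1_restr_compl_le_three_mul (hlam : 0 < lam) {b β c : Fin p → ℝ}
    (hc : ∀ j, |c j| ≤ lam / 2) (hbasic : (β - b) ⬝ᵥ c + lam * l1 β ≤ lam * l1 b) :
    l1 (restr (β - b) (supp b)ᶜ) ≤ 3 * l1 (restr (β - b) (supp b)) := by
  have hnoise : -(l1 (β - b) * (lam / 2)) ≤ (β - b) ⬝ᵥ c :=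
    neg_le_of_abs_le (abs_dotProduct_le_l1_mul hc)
  have htri := l1_sub_l1_restr_supp_add_l1_restr_compl_le b (β - b)
  rw [add_sub_cancel] at htri
  rw [l1_eq_l1_restr_add_l1_restr_compl (β - b) (supp b)] at hnoise
  have hcone : lam * (l1 (restr (β - b) (supp b)ᶜ) - 3 * l1 (restr (β - b) (supp b))) ≤ 0 := by
    linarith [mul_le_mul_of_nonneg_left htri hlam.le]
  exact sub_nonpos.mp (nonpos_of_mul_nonpos_right hcone hlam)

end Lasso

theorem stmt3_general {p : ℕ} (A : Matrix (Fin p) (Fin p) ℝ) (hA : A.PosSemidef)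
    (a βstar : Fin p → ℝ) (lam : ℝ) (hlam : 0 < lam)
    (h1 : ∀ j, |(A.mulVec βstar - a) j| ≤ lam / 2)
    (βhat : Fin p → ℝ) (hmin : ∀ β, Fobj A a lam βhat ≤ Fobj A a lam β) :
    l1 (restr (βhat - βstar) (supp βstar)ᶜ) ≤ 3 * l1 (restr (βhat - βstar) (supp βstar)) :=
  l1_restr_compl_le_three_mul hlam h1 (dotProduct_add_mul_l1_le_of_forall_Fobj_le hA hmin βstar)

/-- if `|Aβ* − a|_∞ ≤ λ/2`, then every global minimizer `β̂` of `F`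
satisfies the cone condition `|(β̂ − β*)_{Sᶜ}|₁ ≤ 3 |(β̂ − β*)_S|₁`. -/
theorem stmt3 {p : ℕ} (hp : 1 ≤ p) (A : Matrix (Fin p) (Fin p) ℝ) (hA : A.PosSemidef)
    (a βstar : Fin p → ℝ) (lam : ℝ) (hlam : 0 < lam)
    (h1 : ∀ j, |(A.mulVec βstar - a) j| ≤ lam / 2)
    (βhat : Fin p → ℝ) (hmin : ∀ β, Fobj A a lam βhat ≤ Fobj A a lam β) :
    l1 (restr (βhat - βstar) (supp βstar)ᶜ) ≤ 3 * l1 (restr (βhat - βstar) (supp βstar)) :=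
  stmt3_general A hA a βstar lam hlam h1 βhat hmin
end

section
/- If |Aβ* − a|_∞ ≤ λ/2, then every global minimizer β̂ of F satisfies |A(β̂ − β*)|_∞ ≤ 3λ/2. -/
open Matrix Finset

/-!
Along each coordinate line `t ↦ β̂ + t eⱼ` the objective is bounded above by
`F(β̂) + t (Aβ̂ − a)ⱼ + t² Aⱼⱼ / 2 + λ|t|`, so minimality of `β̂` and `t → 0±` give the
subgradient condition `|(Aβ̂ − a)ⱼ| ≤ λ`. Since `A(β̂ − β*) = (Aβ̂ − a) − (Aβ* − a)`, the triangle
inequality finishes the proof.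
-/

theorem Matrix.IsSymm.dotProduct_mulVec_add_single {n R : Type*} [Fintype n] [DecidableEq n]
    [CommRing R] {A : Matrix n n R} (hA : A.IsSymm) (v : n → R) (j : n) (t : R) :
    (v + Pi.single j t) ⬝ᵥ A *ᵥ (v + Pi.single j t)
      = v ⬝ᵥ A *ᵥ v + 2 * t * (A *ᵥ v) j + t ^ 2 * A j j := by
  have hcross : v ⬝ᵥ A *ᵥ Pi.single j t = t * (A *ᵥ v) j := by
    rw [dotProduct_mulVec, dotProduct_single, ← vecMul_transpose, hA.eq, mul_comm]
  have hdiag : Pi.single j t ⬝ᵥ A *ᵥ Pi.single j t = t ^ 2 * A j j := by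
    simp only [single_dotProduct, mulVec_single, Pi.smul_apply, col_apply, op_smul_eq_mul]
    ring
  rw [mulVec_add, dotProduct_add, add_dotProduct, add_dotProduct, hcross, hdiag,
    single_dotProduct]
  ring

theorem l1_add_le {p : ℕ} (u v : Fin p → ℝ) : l1 (u + v) ≤ l1 u + l1 v := by
  unfold l1
  rw [← sum_add_distrib]
  exact sum_le_sum fun i _ => abs_add_le (u i) (v i)

theorem l1_single {p : ℕ} (j : Fin p) (t : ℝ) : l1 (Pi.single j t) = |t| := by
  simp [l1, Pi.apply_single (fun _ x => |x|)]

theorem Fobj_add_single_le {p : ℕ} {A : Matrix (Fin p) (Fin p) ℝ} (hA : A.IsSymm)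
    (a : Fin p → ℝ) {lam : ℝ} (hlam : 0 ≤ lam) (β : Fin p → ℝ) (j : Fin p) (t : ℝ) :
    Fobj A a lam (β + Pi.single j t)
      ≤ Fobj A a lam β + t * (A *ᵥ β - a) j + t ^ 2 / 2 * A j j + lam * |t| := by
  have hl1 : lam * l1 (β + Pi.single j t) ≤ lam * l1 β + lam * |t| := by
    rw [← l1_single j t, ← mul_add]
    exact mul_le_mul_of_nonneg_left (l1_add_le _ _) hlam
  simp only [Fobj, hA.dotProduct_mulVec_add_single, add_dotProduct, single_dotProduct,
    Pi.sub_apply]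
  linarith

theorem abs_le_of_forall_mul_add_sq_add_abs_nonneg {g c lam : ℝ}
    (h : ∀ t, 0 ≤ t * g + c * t ^ 2 + lam * |t|) : |g| ≤ lam := by
  have hpos : ∀ t > 0, |g| ≤ lam + c * t := by
    intro t ht
    have hplus : 0 ≤ t * (g + c * t + lam) := by
      have := h t; rw [abs_of_pos ht] at this; linarith
    have hminus : 0 ≤ t * (-g + c * t + lam) := by
      have := h (-t); rw [abs_neg, abs_of_pos ht] at this; linarith
    have hlower := nonneg_of_mul_nonneg_right hplus ht
    have hupper := nonneg_of_mul_nonneg_right hminus ht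
    rw [abs_le]; constructor <;> linarith
  have hlim : Filter.Tendsto (fun t => lam + c * t) (nhdsWithin 0 (Set.Ioi 0)) (nhds lam) := by
    apply tendsto_nhdsWithin_of_tendsto_nhds
    exact (by fun_prop : Continuous fun t : ℝ => lam + c * t).tendsto' 0 lam (by simp)
  exact ge_of_tendsto hlim (eventually_nhdsWithin_of_forall hpos)

theorem abs_mulVec_sub_apply_le_of_minimizer {p : ℕ} {A : Matrix (Fin p) (Fin p) ℝ}
    (hA : A.IsSymm) {a : Fin p → ℝ} {lam : ℝ} (hlam : 0 ≤ lam) {βhat : Fin p → ℝ}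
    (hmin : ∀ β, Fobj A a lam βhat ≤ Fobj A a lam β) (j : Fin p) :
    |(A *ᵥ βhat - a) j| ≤ lam := by
  refine abs_le_of_forall_mul_add_sq_add_abs_nonneg (c := A j j / 2) fun t => ?_
  have := (hmin _).trans (Fobj_add_single_le hA a hlam βhat j t)
  linarith

theorem stmt6_general {p : ℕ} (A : Matrix (Fin p) (Fin p) ℝ) (hA : A.PosSemidef)
    (a βstar : Fin p → ℝ) (lam : ℝ) (hlam : 0 < lam)
    (h1 : ∀ j, |(A.mulVec βstar - a) j| ≤ lam / 2)
    (βhat : Fin p → ℝ) (hmin : ∀ β, Fobj A a lam βhat ≤ Fobj A a lam β) :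
    ∀ j, |(A.mulVec (βhat - βstar)) j| ≤ 3 * lam / 2 := by
  intro j
  have hgrad := abs_mulVec_sub_apply_le_of_minimizer
    (isHermitian_iff_isSymm.mp hA.isHermitian) hlam.le hmin j
  calc |(A *ᵥ (βhat - βstar)) j| = |(A *ᵥ βhat - a) j - (A *ᵥ βstar - a) j| := by
        simp only [mulVec_sub, Pi.sub_apply, sub_sub_sub_cancel_right]
    _ ≤ |(A *ᵥ βhat - a) j| + |(A *ᵥ βstar - a) j| := abs_sub _ _
    _ ≤ lam + lam / 2 := add_le_add hgrad (h1 j)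
    _ = 3 * lam / 2 := by ring

/-- if `|Aβ* − a|_∞ ≤ λ/2`, then every global minimizer `β̂` of `F`
satisfies `|A(β̂ − β*)|_∞ ≤ 3λ/2`. -/
theorem stmt6 {p : ℕ} (hp : 1 ≤ p) (A : Matrix (Fin p) (Fin p) ℝ) (hA : A.PosSemidef)
    (a βstar : Fin p → ℝ) (lam : ℝ) (hlam : 0 < lam)
    (h1 : ∀ j, |(A.mulVec βstar - a) j| ≤ lam / 2)
    (βhat : Fin p → ℝ) (hmin : ∀ β, Fobj A a lam βhat ≤ Fobj A a lam β) :
    ∀ j, |(A.mulVec (βhat - βstar)) j| ≤ 3 * lam / 2 :=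
  stmt6_general A hA a βstar lam hlam h1 βhat hmin
end

section
/- Suppose there exist t > 0 and B̄ > 0 such that Σᵢ₌₁ᴺ E[ξᵢ² exp(t|ξᵢ|)] ≤ B̄². Then for every x with 0 < x ≤ B̄, P(Σᵢ₌₁ᴺ ξᵢ ≥ (t + t⁻¹)·B̄·x) ≤ exp(−x²). -/
/-!
From `exp v ≤ 1 + v + v² exp |v|`, for a mean-zero `ξ` and `0 ≤ s ≤ t` we get
`E[exp (s ξ)] ≤ 1 + s² E[ξ² exp (t |ξ|)] ≤ exp (s² E[ξ² exp (t |ξ|)])`, so by independence the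
moment generating function of the sum at `s` is at most `exp (s² B̄²)`. The Chernoff bound at
level `(t + t⁻¹) B̄ x` with `s = t x / B̄` (which is `≤ t` exactly when `x ≤ B̄`) gives the
exponent `-(t² + 1) x² + t² x² = -x²`.
-/

open MeasureTheory ProbabilityTheory Real

lemma Real.exp_le_one_add_add_sq_mul_exp_abs (v : ℝ) : exp v ≤ 1 + v + v ^ 2 * exp |v| := by
  rcases le_or_gt |v| 1 with h | h
  · have h2 := (abs_le.1 (abs_exp_sub_one_sub_id_le h)).2
    nlinarith [one_le_exp (abs_nonneg v), sq_nonneg v]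
  · rcases le_or_gt 0 v with hv | hv
    · rw [abs_of_nonneg hv] at h ⊢
      nlinarith [exp_pos v, mul_nonneg (by nlinarith : (0:ℝ) ≤ v ^ 2 - 1) (exp_pos v).le]
    · rw [abs_of_neg hv] at h ⊢
      nlinarith [exp_le_one_iff.2 hv.le, one_le_exp (by linarith : (0:ℝ) ≤ -v)]

lemma Real.exp_mul_le_of_le {s t : ℝ} (hs : 0 ≤ s) (hst : s ≤ t) (u : ℝ) :
    exp (s * u) ≤ 1 + s * u + s ^ 2 * (u ^ 2 * exp (t * |u|)) := by
  calc exp (s * u) ≤ 1 + s * u + (s * u) ^ 2 * exp |s * u| :=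
        exp_le_one_add_add_sq_mul_exp_abs _
    _ = 1 + s * u + s ^ 2 * (u ^ 2 * exp (s * |u|)) := by
        rw [abs_mul, abs_of_nonneg hs]; ring
    _ ≤ 1 + s * u + s ^ 2 * (u ^ 2 * exp (t * |u|)) := by gcongr

namespace ProbabilityTheory

variable {Ω : Type*} [MeasurableSpace Ω] {μ : Measure Ω} {s t : ℝ}

section SingleVariable

variable {X : Ω → ℝ}

lemma integrable_one_add_mul_add_sq_mul [IsFiniteMeasure μ] (hX : Integrable X μ)
    (hXt : Integrable (fun ω ↦ X ω ^ 2 * exp (t * |X ω|)) μ) (s : ℝ) :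
    Integrable (fun ω ↦ 1 + s * X ω + s ^ 2 * (X ω ^ 2 * exp (t * |X ω|))) μ :=
  ((integrable_const 1).add (hX.const_mul s)).add (hXt.const_mul (s ^ 2))

lemma integrable_exp_mul_of_integrable_sq_mul_exp_abs [IsFiniteMeasure μ] (hX : Integrable X μ)
    (hXt : Integrable (fun ω ↦ X ω ^ 2 * exp (t * |X ω|)) μ) (hs : 0 ≤ s) (hst : s ≤ t) :
    Integrable (fun ω ↦ exp (s * X ω)) μ := by
  refine (integrable_one_add_mul_add_sq_mul hX hXt s).mono'
    (hX.aemeasurable.const_mul s).exp.aestronglyMeasurable (ae_of_all _ fun ω ↦ ?_)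
  rw [norm_of_nonneg (exp_pos _).le]
  exact exp_mul_le_of_le hs hst (X ω)

lemma mgf_le_exp_sq_mul_integral_sq_mul_exp_abs [IsProbabilityMeasure μ] (hX : Integrable X μ)
    (hmean : μ[X] = 0) (hXt : Integrable (fun ω ↦ X ω ^ 2 * exp (t * |X ω|)) μ) (hs : 0 ≤ s) (hst : s ≤ t) :
    mgf X μ s ≤ exp (s ^ 2 * ∫ ω, X ω ^ 2 * exp (t * |X ω|) ∂μ) := by
  calc mgf X μ s
      ≤ ∫ ω, (1 + s * X ω + s ^ 2 * (X ω ^ 2 * exp (t * |X ω|))) ∂μ :=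
        integral_mono (integrable_exp_mul_of_integrable_sq_mul_exp_abs hX hXt hs hst)
          (integrable_one_add_mul_add_sq_mul hX hXt s) fun ω ↦ exp_mul_le_of_le hs hst _
    _ = 1 + s ^ 2 * ∫ ω, X ω ^ 2 * exp (t * |X ω|) ∂μ := by
        have hlinear : Integrable (fun ω ↦ 1 + s * X ω) μ :=
          (integrable_const 1).add (hX.const_mul s)
        rw [integral_add hlinear (hXt.const_mul _),
          integral_add (integrable_const 1) (hX.const_mul s), integral_const_mul,
          integral_const_mul, hmean]
        simp
    _ ≤ exp (s ^ 2 * ∫ ω, X ω ^ 2 * exp (t * |X ω|) ∂μ) := by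
        linarith [add_one_le_exp (s ^ 2 * ∫ ω, X ω ^ 2 * exp (t * |X ω|) ∂μ)]

end SingleVariable

variable {ι : Type*} [Fintype ι] {X : ι → Ω → ℝ}

lemma iIndepFun.mgf_sum_le_exp_sq_mul_sum (hindep : iIndepFun X μ)
    (hX : ∀ i, Integrable (X i) μ) (hmean : ∀ i, μ[X i] = 0)
    (hXt : ∀ i, Integrable (fun ω ↦ X i ω ^ 2 * exp (t * |X i ω|)) μ)
    (hs : 0 ≤ s) (hst : s ≤ t) :
    mgf (∑ i, X i) μ s ≤ exp (s ^ 2 * ∑ i, ∫ ω, X i ω ^ 2 * exp (t * |X i ω|) ∂μ) := by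
  have := hindep.isProbabilityMeasure
  rw [hindep.mgf_sum₀ (fun i ↦ (hX i).aemeasurable), Finset.mul_sum, exp_sum]
  exact Finset.prod_le_prod (fun i _ ↦ mgf_nonneg) fun i _ ↦
    mgf_le_exp_sq_mul_integral_sq_mul_exp_abs (hX i) (hmean i) (hXt i) hs hst

lemma iIndepFun.integrable_exp_mul_sum_of_integrable_sq_mul_exp_abs (hindep : iIndepFun X μ)
    (hX : ∀ i, Integrable (X i) μ)
    (hXt : ∀ i, Integrable (fun ω ↦ X i ω ^ 2 * exp (t * |X i ω|)) μ)
    (hs : 0 ≤ s) (hst : s ≤ t) :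
    Integrable (fun ω ↦ exp (s * (∑ i, X i) ω)) μ := by
  have := hindep.isProbabilityMeasure
  rw [← mgf_pos_iff, hindep.mgf_sum₀ (fun i ↦ (hX i).aemeasurable)]
  exact Finset.prod_pos fun i _ ↦
    mgf_pos (integrable_exp_mul_of_integrable_sq_mul_exp_abs (hX i) (hXt i) hs hst)

lemma iIndepFun.measureReal_le_sum_le_exp (hindep : iIndepFun X μ)
    (hX : ∀ i, Integrable (X i) μ) (hmean : ∀ i, μ[X i] = 0)
    (hXt : ∀ i, Integrable (fun ω ↦ X i ω ^ 2 * exp (t * |X i ω|)) μ)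
    (hs : 0 ≤ s) (hst : s ≤ t) (a : ℝ) :
    μ.real {ω | a ≤ ∑ i, X i ω} ≤
      exp (-s * a + s ^ 2 * ∑ i, ∫ ω, X i ω ^ 2 * exp (t * |X i ω|) ∂μ) := by
  have := hindep.isProbabilityMeasure
  have hchernoff := measure_ge_le_exp_mul_mgf a hs
    (hindep.integrable_exp_mul_sum_of_integrable_sq_mul_exp_abs hX hXt hs hst)
  simp only [Finset.sum_apply] at hchernoff
  rw [exp_add]
  exact hchernoff.trans (mul_le_mul_of_nonneg_left
    (hindep.mgf_sum_le_exp_sq_mul_sum hX hmean hXt hs hst) (exp_pos _).le)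

end ProbabilityTheory

/-- a Bernstein-type inequality. If `ξ₁, …, ξ_N` are independent,
integrable, mean-zero random variables and there are `t > 0`, `B̄ > 0` with
`Σᵢ E[ξᵢ² exp(t|ξᵢ|)] ≤ B̄²`, then for every `0 < x ≤ B̄` we have
`P(Σᵢ ξᵢ ≥ (t + t⁻¹) B̄ x) ≤ exp(−x²)`. -/
theorem stmt8 {Ω : Type*} [MeasurableSpace Ω] (P : Measure Ω) [IsProbabilityMeasure P]
    (N : ℕ) (ξ : Fin N → Ω → ℝ)
    (hindep : iIndepFun ξ P)
    (hint : ∀ i, Integrable (ξ i) P)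
    (hmean : ∀ i, ∫ ω, ξ i ω ∂P = 0)
    (t B : ℝ) (ht : 0 < t) (hB : 0 < B)
    (hint2 : ∀ i, Integrable (fun ω => (ξ i ω) ^ 2 * Real.exp (t * |ξ i ω|)) P)
    (hbound : ∑ i, ∫ ω, (ξ i ω) ^ 2 * Real.exp (t * |ξ i ω|) ∂P ≤ B ^ 2) :
    ∀ x : ℝ, 0 < x → x ≤ B →
      P {ω | (t + t⁻¹) * B * x ≤ ∑ i, ξ i ω} ≤ ENNReal.ofReal (Real.exp (-x ^ 2)) := by
  intro x hx hxB
  set s := t * x / B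
  have hs : 0 ≤ s := by positivity
  have hst : s ≤ t := by rw [div_le_iff₀ hB]; nlinarith
  have hexponent : -s * ((t + t⁻¹) * B * x)
      + s ^ 2 * ∑ i, ∫ ω, ξ i ω ^ 2 * exp (t * |ξ i ω|) ∂P ≤ -x ^ 2 :=
    calc _ ≤ -s * ((t + t⁻¹) * B * x) + s ^ 2 * B ^ 2 := by gcongr
      _ = -x ^ 2 := by simp only [s]; field_simp; ring
  rw [← ofReal_measureReal]
  exact ENNReal.ofReal_le_ofReal <|
    (hindep.measureReal_le_sum_le_exp hint hmean hint2 hs hst _).trans (exp_le_exp.2 hexponent)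
end

section
/- Let I, D ∈ ℝ^{p×p} satisfy δᵀIδ ≥ λ₋ |δ|₂² for every δ ∈ ℝ^p (λ₋ > 0), and suppose the entrywise bound max_{i,j} |D_{ij} − I_{ij}| ≤ ε holds. Then for every δ ∈ ℝ^p with |δ|₁ ≤ 4√s·|δ|₂ (s a positive integer), δᵀDδ ≥ (λ₋ − 16 s ε) |δ|₂². -/
/-!
Write `δᵀDδ = δᵀIδ + δᵀ(D − I)δ`. The entrywise bound gives `|δᵀ(D − I)δ| ≤ ε |δ|₁²`, and on the
cone `|δ|₁ ≤ 4√s |δ|₂` this is at most `16 s ε |δ|₂²`, which is subtracted from the lower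
bound `λ₋ |δ|₂²` on the first term.
-/

open Matrix Finset

lemma l1_nonneg {p : ℕ} (v : Fin p → ℝ) : 0 ≤ l1 v :=
  sum_nonneg fun j _ => abs_nonneg (v j)

lemma abs_dotProduct_mulVec_le_mul_l1 {p : ℕ} {M : Matrix (Fin p) (Fin p) ℝ} {ε : ℝ}
    (hM : ∀ i j, |M i j| ≤ ε) (u v : Fin p → ℝ) :
    |u ⬝ᵥ M *ᵥ v| ≤ ε * l1 u * l1 v := by
  have hexpand : u ⬝ᵥ M *ᵥ v = ∑ i, ∑ j, u i * (M i j * v j) := by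
    simp only [dotProduct, mulVec, mul_sum]
  calc |u ⬝ᵥ M *ᵥ v|
      ≤ ∑ i, ∑ j, |u i * (M i j * v j)| := by
        rw [hexpand]
        exact (abs_sum_le_sum_abs _ _).trans (sum_le_sum fun i _ => abs_sum_le_sum_abs _ _)
    _ ≤ ∑ i, ∑ j, |u i| * (ε * |v j|) := by
        gcongr with i _ j _
        rw [abs_mul, abs_mul]
        gcongr
        exact hM i j
    _ = ε * l1 u * l1 v := by
        rw [l1, l1, mul_assoc, sum_mul_sum, mul_sum]
        exact sum_congr rfl fun i _ => by rw [mul_sum]; exact sum_congr rfl fun j _ => by ring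

lemma sq_l1_le_of_mem_cone {p : ℕ} {v : Fin p → ℝ} {s : ℝ} (hs : 0 ≤ s)
    (hv : l1 v ≤ 4 * √s * l2 v) : l1 v ^ 2 ≤ 16 * s * l2 v ^ 2 :=
  calc l1 v ^ 2 ≤ (4 * √s * l2 v) ^ 2 := pow_le_pow_left₀ (l1_nonneg v) hv 2
    _ = 16 * s * l2 v ^ 2 := by rw [mul_pow, mul_pow, Real.sq_sqrt hs]; ring

lemma quadForm_ge_of_entrywise_close {p : ℕ} {I D : Matrix (Fin p) (Fin p) ℝ} {lam ε c : ℝ}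
    (hI : ∀ δ : Fin p → ℝ, lam * l2 δ ^ 2 ≤ δ ⬝ᵥ I *ᵥ δ) (hε : ∀ i j, |D i j - I i j| ≤ ε)
    (hε0 : 0 ≤ ε) {δ : Fin p → ℝ} (hδ : l1 δ ^ 2 ≤ c * l2 δ ^ 2) :
    (lam - c * ε) * l2 δ ^ 2 ≤ δ ⬝ᵥ D *ᵥ δ := by
  have hsplit : δ ⬝ᵥ D *ᵥ δ = δ ⬝ᵥ I *ᵥ δ + δ ⬝ᵥ (D - I) *ᵥ δ := by
    rw [sub_mulVec, dotProduct_sub]; ring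
  have hpert : |δ ⬝ᵥ (D - I) *ᵥ δ| ≤ ε * l1 δ ^ 2 := by
    simpa only [mul_assoc, sq] using abs_dotProduct_mulVec_le_mul_l1 (M := D - I) hε δ δ
  have hcone : ε * l1 δ ^ 2 ≤ ε * (c * l2 δ ^ 2) := mul_le_mul_of_nonneg_left hδ hε0
  linarith [hI δ, neg_abs_le (δ ⬝ᵥ (D - I) *ᵥ δ)]

theorem stmt14_general {p : ℕ} (I D : Matrix (Fin p) (Fin p) ℝ) (lamMinus ε : ℝ)
    (hI : ∀ δ : Fin p → ℝ, lamMinus * (l2 δ) ^ 2 ≤ δ ⬝ᵥ I.mulVec δ)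
    (hε : ∀ i j, |D i j - I i j| ≤ ε)
    (s : ℕ) :
    ∀ δ : Fin p → ℝ, l1 δ ≤ 4 * Real.sqrt (s : ℝ) * l2 δ →
      (lamMinus - 16 * (s : ℝ) * ε) * (l2 δ) ^ 2 ≤ δ ⬝ᵥ D.mulVec δ := by
  intro δ hδ
  obtain hε0 | hεneg := le_or_gt 0 ε
  · exact quadForm_ge_of_entrywise_close hI hε hε0 (sq_l1_le_of_mem_cone s.cast_nonneg hδ)
  · -- a negative `ε` is only compatible with `hε` when `p = 0`
    have : IsEmpty (Fin p) := ⟨fun i => (abs_nonneg _).not_gt ((hε i i).trans_lt hεneg)⟩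
    simp [l2]

/-- if `δᵀIδ ≥ λ₋|δ|₂²` for all `δ` and the entrywise bound
`max_{i,j} |D_{ij} − I_{ij}| ≤ ε` holds, then for every `δ` in the cone
`|δ|₁ ≤ 4√s|δ|₂`, `δᵀDδ ≥ (λ₋ − 16 s ε)|δ|₂²`. -/
theorem stmt14 {p : ℕ} (I D : Matrix (Fin p) (Fin p) ℝ) (lamMinus ε : ℝ)
    (hlam : 0 < lamMinus)
    (hI : ∀ δ : Fin p → ℝ, lamMinus * (l2 δ) ^ 2 ≤ δ ⬝ᵥ I.mulVec δ)
    (hε : ∀ i j, |D i j - I i j| ≤ ε)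
    (s : ℕ) (hs : 0 < s) :
    ∀ δ : Fin p → ℝ, l1 δ ≤ 4 * Real.sqrt (s : ℝ) * l2 δ →
      (lamMinus - 16 * (s : ℝ) * ε) * (l2 δ) ^ 2 ≤ δ ⬝ᵥ D.mulVec δ :=
  stmt14_general I D lamMinus ε hI hε s
end

section
/- Let N, m, s be reals with m ≥ 1, s > 0, N > m, log N > 0, m·log(N/m) > 0, set n = N/m, and assume N²/(m² s⁵ log²(N/m)) > 1. If t ≥ 0 satisfies t ≥ 3·log(m·log(N/m)/log N) / log(N²/(m² s⁵ log²(N/m))), then s^{(5t+3)/6} (log n / n)^{(2t+3)/6} ≤ (s log N / N)^{1/2}. -/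
/-!
With `q = log n / n` and `B = s log N / N` one has `m log(N/m) / log N = s q / B` and
`N² / (m² s⁵ log²(N/m)) = (s⁵ q²)⁻¹`, so the hypothesis on `t` says `(s q / B)³ ≤ (s⁵ q²)^(-t)`.
The conclusion is the sixth root of this inequality.
-/

open Real

theorem rpow_mul_rpow_le_sqrt_of_log_le {s q B t : ℝ} (hs : 0 < s) (hq : 0 < q) (hB : 0 < B)
    (h : 3 * log (s * q / B) ≤ t * log (s ^ 5 * q ^ 2)⁻¹) :
    s ^ ((5 * t + 3) / 6) * q ^ ((2 * t + 3) / 6) ≤ B ^ ((1 : ℝ) / 2) := by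
  rw [← log_le_log_iff (by positivity) (by positivity), log_mul (by positivity) (by positivity),
    log_rpow hs, log_rpow hq, log_rpow hB]
  rw [log_inv, log_mul (by positivity) (by positivity), log_pow, log_pow,
    log_div (by positivity) hB.ne', log_mul hs.ne' hq.ne'] at h
  push_cast at h
  linarith

theorem stmt17_general (N m s n t : ℝ)
    (hN : 0 < N) (hm : 1 ≤ m) (hs : 0 < s)
    (hlogN : 0 < Real.log N)
    (hmlog : 0 < m * Real.log (N / m))
    (hn : n = N / m)
    (h1 : 1 < N ^ 2 / (m ^ 2 * s ^ 5 * (Real.log (N / m)) ^ 2))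
    (ht : 3 * Real.log (m * Real.log (N / m) / Real.log N)
        / Real.log (N ^ 2 / (m ^ 2 * s ^ 5 * (Real.log (N / m)) ^ 2)) ≤ t) :
    s ^ ((5 * t + 3) / 6) * (Real.log n / n) ^ ((2 * t + 3) / 6)
      ≤ (s * Real.log N / N) ^ ((1 : ℝ) / 2) := by
  subst hn
  have hm0 : 0 < m := one_pos.trans_le hm
  have hL : 0 < log (N / m) := pos_of_mul_pos_right hmlog hm0.le
  have hsq : s * (log (N / m) / (N / m)) / (s * log N / N) = m * log (N / m) / log N := by
    field_simp
  have hinv : (s ^ 5 * (log (N / m) / (N / m)) ^ 2)⁻¹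
      = N ^ 2 / (m ^ 2 * s ^ 5 * log (N / m) ^ 2) := by
    field_simp
  refine rpow_mul_rpow_le_sqrt_of_log_le hs (by positivity) (by positivity) ?_
  rw [hsq, hinv]
  exact (div_le_iff₀ (log_pos h1)).1 ht

/-- with `n = N/m`, if `N²/(m² s⁵ log²(N/m)) > 1` and
`t ≥ 3 log(m log(N/m) / log N) / log(N²/(m² s⁵ log²(N/m)))`, then
`s^{(5t+3)/6} (log n / n)^{(2t+3)/6} ≤ (s log N / N)^{1/2}`. -/
theorem stmt17 (N m s n t : ℝ)
    (hN : 0 < N) (hm : 1 ≤ m) (hs : 0 < s) (hNm : m < N)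
    (hlogN : 0 < Real.log N)
    (hmlog : 0 < m * Real.log (N / m))
    (hn : n = N / m)
    (h1 : 1 < N ^ 2 / (m ^ 2 * s ^ 5 * (Real.log (N / m)) ^ 2))
    (ht0 : 0 ≤ t)
    (ht : 3 * Real.log (m * Real.log (N / m) / Real.log N)
        / Real.log (N ^ 2 / (m ^ 2 * s ^ 5 * (Real.log (N / m)) ^ 2)) ≤ t) :
    s ^ ((5 * t + 3) / 6) * (Real.log n / n) ^ ((2 * t + 3) / 6)
      ≤ (s * Real.log N / N) ^ ((1 : ℝ) / 2) :=
  stmt17_general N m s n t hN hm hs hlogN hmlog hn h1 ht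
end

section
/- Let S ⊆ {1,…,p}. Suppose β̃ minimizes F over the subspace {β ∈ ℝ^p : βⱼ = 0 for all j ∉ S}, and suppose |(Aβ̃ − a)ⱼ| ≤ λ for every j ∉ S. Then β̃ is a global minimizer of F over all of ℝ^p. -/
open Matrix Finset

/-!
With `g = Aβ̃ - a`, expanding `F` around `β̃` gives
`F β - F β̃ = ⟨β - β̃, g⟩ + λ (|β|₁ - |β̃|₁) + ½ (β - β̃)ᵀA(β - β̃)`, and the last term is
nonnegative. Minimality of `β̃` on the (convex) subspace of vectors supported on `S` gives the
first-order inequality `⟨u - β̃, g⟩ + λ (|u|₁ - |β̃|₁) ≥ 0` for every such `u`. Splitting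
`β = u + w` with `u` supported on `S` and `w` off `S`, the `w` part contributes
`Σ_{j ∉ S} (wⱼ gⱼ + λ|wⱼ|) ≥ 0` by dual feasibility, so the linear part is nonnegative too.
-/

section

variable {p : ℕ}

lemma l1_add_of_disjoint {u w : Fin p → ℝ} (h : ∀ j, u j = 0 ∨ w j = 0) :
    l1 (u + w) = l1 u + l1 w := by
  simp only [l1, ← sum_add_distrib, Pi.add_apply]
  refine sum_congr rfl fun j _ => ?_
  rcases h j with h | h <;> simp [h]

lemma l1_add_smul_sub_le {x y : Fin p → ℝ} {t : ℝ} (ht₀ : 0 ≤ t) (ht₁ : t ≤ 1) :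
    l1 (x + t • (y - x)) ≤ l1 x + t * (l1 y - l1 x) := by
  have key : ∀ j, |x j + t * (y j - x j)| ≤ |x j| + t * (|y j| - |x j|) := fun j =>
    calc |x j + t * (y j - x j)| = |(1 - t) * x j + t * y j| := by ring_nf
      _ ≤ |(1 - t) * x j| + |t * y j| := abs_add_le _ _
      _ = |x j| + t * (|y j| - |x j|) := by
        rw [abs_mul, abs_mul, abs_of_nonneg (sub_nonneg.2 ht₁), abs_of_nonneg ht₀]; ring
  calc l1 (x + t • (y - x)) ≤ ∑ j, (|x j| + t * (|y j| - |x j|)) := sum_le_sum fun j _ => key j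
    _ = l1 x + t * (l1 y - l1 x) := by
      simp only [l1, sum_add_distrib, mul_sub, mul_sum, sum_sub_distrib]

lemma dotProduct_add_mul_l1_nonneg {w g : Fin p → ℝ} {lam : ℝ}
    (h : ∀ j, w j ≠ 0 → |g j| ≤ lam) : 0 ≤ w ⬝ᵥ g + lam * l1 w := by
  simp only [dotProduct, l1, mul_sum, ← sum_add_distrib]
  refine sum_nonneg fun j _ => ?_
  by_cases hw : w j = 0
  · simp [hw]
  · have := mul_le_mul_of_nonneg_right (h j hw) (abs_nonneg (w j))
    nlinarith [neg_abs_le (w j * g j), abs_mul (w j) (g j)]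

lemma nonneg_of_forall_add_mul_nonneg {b c : ℝ} (h : ∀ t : ℝ, 0 < t → t ≤ 1 → 0 ≤ b + t * c) :
    0 ≤ b := by
  have hlim : Filter.Tendsto (fun t : ℝ => b + t * c) (nhdsWithin 0 (Set.Ioi 0)) (nhds b) := by
    have : Filter.Tendsto (fun t : ℝ => b + t * c) (nhds 0) (nhds (b + 0 * c)) :=
      (continuous_const.add (continuous_id.mul continuous_const)).tendsto 0
    simpa using this.mono_left nhdsWithin_le_nhds
  refine ge_of_tendsto hlim ?_
  filter_upwards [Ioc_mem_nhdsGT (zero_lt_one' ℝ)] with t ht using h t ht.1 ht.2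

variable {A : Matrix (Fin p) (Fin p) ℝ} {a : Fin p → ℝ} {lam : ℝ}

lemma Fobj_eq_add_sub (hA : A.IsSymm) (x y : Fin p → ℝ) :
    Fobj A a lam y = Fobj A a lam x + ((y - x) ⬝ᵥ (A *ᵥ x - a) + lam * (l1 y - l1 x))
      + 1 / 2 * ((y - x) ⬝ᵥ A *ᵥ (y - x)) := by
  have hsymm : x ⬝ᵥ A *ᵥ (y - x) = (y - x) ⬝ᵥ A *ᵥ x := by
    rw [dotProduct_mulVec, ← mulVec_transpose, hA.eq, dotProduct_comm]
  obtain ⟨d, rfl⟩ : ∃ d, y = x + d := ⟨y - x, by abel⟩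
  simp only [add_sub_cancel_left] at hsymm ⊢
  simp only [Fobj, mulVec_add, dotProduct_add, add_dotProduct, dotProduct_sub, hsymm]
  ring

lemma Fobj_first_order_of_isMinOn (hA : A.IsSymm) (hlam : 0 ≤ lam)
    {C : Set (Fin p → ℝ)} (hC : Convex ℝ C) {x : Fin p → ℝ} (hx : x ∈ C)
    (hmin : IsMinOn (Fobj A a lam) C x) {y : Fin p → ℝ} (hy : y ∈ C) :
    0 ≤ (y - x) ⬝ᵥ (A *ᵥ x - a) + lam * (l1 y - l1 x) := by
  refine nonneg_of_forall_add_mul_nonneg (c := 1 / 2 * ((y - x) ⬝ᵥ A *ᵥ (y - x)))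
    fun t ht₀ ht₁ => ?_
  have hz := isMinOn_iff.1 hmin _ (hC.add_smul_sub_mem hx hy ⟨ht₀.le, ht₁⟩)
  rw [Fobj_eq_add_sub hA x (x + t • (y - x)), add_sub_cancel_left] at hz
  have hl1 := mul_le_mul_of_nonneg_left (l1_add_smul_sub_le (x := x) (y := y) ht₀.le ht₁) hlam
  simp only [smul_dotProduct, mulVec_smul, dotProduct_smul, smul_eq_mul] at hz
  nlinarith

end

theorem stmt19_general {p : ℕ} (A : Matrix (Fin p) (Fin p) ℝ) (hA : A.PosSemidef)
    (a : Fin p → ℝ) (lam : ℝ) (hlam : 0 < lam)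
    (S : Finset (Fin p)) (βtilde : Fin p → ℝ)
    (hsupp : ∀ j ∉ S, βtilde j = 0)
    (hmin : ∀ β : Fin p → ℝ, (∀ j ∉ S, β j = 0) → Fobj A a lam βtilde ≤ Fobj A a lam β)
    (hdual : ∀ j ∉ S, |(A.mulVec βtilde - a) j| ≤ lam) :
    ∀ β : Fin p → ℝ, Fobj A a lam βtilde ≤ Fobj A a lam β := by
  intro β
  have hsymm : A.IsSymm := isHermitian_iff_isSymm.mp hA.isHermitian
  set u : Fin p → ℝ := fun j => if j ∈ S then β j else 0
  set w : Fin p → ℝ := fun j => if j ∈ S then 0 else β j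
  have hβ : β = u + w := funext fun j => by by_cases hj : j ∈ S <;> simp [u, w, hj]
  have hconvex : Convex ℝ {v : Fin p → ℝ | ∀ j ∉ S, v j = 0} :=
    fun v hv v' hv' s t _ _ _ j hj => by simp [hv j hj, hv' j hj]
  have hfirst := Fobj_first_order_of_isMinOn hsymm hlam.le hconvex hsupp (isMinOn_iff.2 hmin)
    (y := u) fun j hj => if_neg hj
  have hoff := dotProduct_add_mul_l1_nonneg (w := w) (g := A *ᵥ βtilde - a) (lam := lam)
    fun j hj => hdual j fun hjS => hj (if_pos hjS)
  have hl1 : l1 β = l1 u + l1 w := by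
    rw [hβ]; exact l1_add_of_disjoint fun j => by by_cases hj : j ∈ S <;> simp [u, w, hj]
  have hlinear : 0 ≤ (β - βtilde) ⬝ᵥ (A *ᵥ βtilde - a) + lam * (l1 β - l1 βtilde) := by
    have hsplit : β - βtilde = (u - βtilde) + w := by rw [hβ]; abel
    rw [hsplit, add_dotProduct, hl1]
    linarith
  have hquad := hA.dotProduct_mulVec_nonneg (β - βtilde)
  rw [star_trivial] at hquad
  rw [Fobj_eq_add_sub hsymm βtilde β]
  linarith

/-- primal–dual witness. If `β̃` minimizes `F` over vectors supported
on `S` and the dual feasibility `|(Aβ̃ − a)ⱼ| ≤ λ` holds for every `j ∉ S`, then `β̃`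
is a global minimizer of `F` over all of `ℝ^p`. -/
theorem stmt19 {p : ℕ} (hp : 1 ≤ p) (A : Matrix (Fin p) (Fin p) ℝ) (hA : A.PosSemidef)
    (a : Fin p → ℝ) (lam : ℝ) (hlam : 0 < lam)
    (S : Finset (Fin p)) (βtilde : Fin p → ℝ)
    (hsupp : ∀ j ∉ S, βtilde j = 0)
    (hmin : ∀ β : Fin p → ℝ, (∀ j ∉ S, β j = 0) → Fobj A a lam βtilde ≤ Fobj A a lam β)
    (hdual : ∀ j ∉ S, |(A.mulVec βtilde - a) j| ≤ lam) :
    ∀ β : Fin p → ℝ, Fobj A a lam βtilde ≤ Fobj A a lam β :=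
  stmt19_general A hA a lam hlam S βtilde hsupp hmin hdual
end
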